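/- arXiv:1803.01735 — 3 statements merged into one kernel-verified Lean document; each statement's English description precedes it below -/
import Mathlib

section
/- For 0 ≤ i ≤ n, the dual Bernstein polynomial admits the short expansion D^n_i(x; α, β) = [(-1)^{n-i} (σ+1)_n / (K (α+1)_{n-i} (β+1)_i)] · Σ_{k=0}^{i} [(-i)_k / (-n)_k] R^{(α, β+k+1)}_{n-k}(x), where σ = α+β+1 and K = Γ(α+1)Γ(β+1)/Γ(σ+1). -/
open scoped BigOperators
open MeasureTheory Polynomial

/-- Pochhammer symbol `(c)_l = c (c+1) ⋯ (c+l-1)`. -/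
noncomputable def poch (c : ℝ) (l : ℕ) : ℝ := ∏ j ∈ Finset.range l, (c + j)

/-- Shifted Jacobi polynomial `R_k^{(α,β)}(x)`. -/
noncomputable def jacobiR (α β : ℝ) (k : ℕ) (x : ℝ) : ℝ :=
  poch (α + 1) k / (Nat.factorial k) *
    ∑ l ∈ Finset.range (k + 1),
      poch (-(k : ℝ)) l * poch ((k : ℝ) + α + β + 1) l /
        (poch (α + 1) l * (Nat.factorial l)) * (1 - x) ^ l

/-- Hahn polynomial `Q_k(x; α, β; N)`. -/
noncomputable def hahnQ (α β : ℝ) (N k : ℕ) (x : ℝ) : ℝ :=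
  ∑ l ∈ Finset.range (k + 1),
    poch (-(k : ℝ)) l * poch ((k : ℝ) + α + β + 1) l * poch (-x) l /
      (poch (α + 1) l * poch (-(N : ℝ)) l * (Nat.factorial l))

/-- Bernstein basis polynomial `B^n_i(x)` as a real function. -/
noncomputable def bern (n i : ℕ) (x : ℝ) : ℝ :=
  (n.choose i : ℝ) * x ^ i * (1 - x) ^ (n - i)

/-- `D 0, …, D n` are the dual Bernstein polynomials of degree `n` with
parameters `α, β`: they have degree at most `n` and are biorthogonal to the
Bernstein basis w.r.t. the weight `(1-x)^α x^β` on `[0,1]`. -/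
def IsDualBernstein (n : ℕ) (α β : ℝ) (D : ℕ → Polynomial ℝ) : Prop :=
  (∀ j, j ≤ n → (D j).natDegree ≤ n) ∧
  ∀ i, i ≤ n → ∀ j, j ≤ n →
    (∫ x in (0:ℝ)..1, (1 - x) ^ α * x ^ β * bern n i x * (D j).eval x)
      = if i = j then (1:ℝ) else 0

/-
The polynomial `E_i` on the right-hand side has degree `≤ n`, and a polynomial of degree `≤ n`
is determined by its weighted integrals against the Bernstein basis `B^n_0, …, B^n_n`: if they all
vanish, it is orthogonal to itself, hence zero. So it suffices to check
`∫ w B^n_j E_i = δ_ij` for the weight `w = (1-x)^α x^β`. Expanding `R^{(α,β+k+1)}_{n-k}` in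
powers of `1 - x`, every term against `w B^n_j` is a Beta integral, and Chu–Vandermonde sums them to
`K C(n,j) (β+1)_j (α+1)_{n-j} / (σ+1)_n · (j-n)_{n-k} / (n-k)!`. The remaining sum over `k` is an
alternating binomial sum, which vanishes unless `i = j`.
-/

lemma poch_eq_ascPochhammer_eval (c : ℝ) (l : ℕ) : poch c l = (ascPochhammer ℝ l).eval c := by
  induction l with
  | zero => simp [poch]
  | succ l ih => rw [poch, Finset.prod_range_succ, ← poch, ih, ascPochhammer_succ_eval]

lemma poch_add (c : ℝ) (l m : ℕ) : poch c (l + m) = poch c l * poch (c + l) m := by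
  simp only [poch, Finset.prod_range_add, Nat.cast_add, add_assoc]

lemma poch_pos {c : ℝ} (hc : 0 < c) (l : ℕ) : 0 < poch c l := by
  rw [poch_eq_ascPochhammer_eval]
  exact ascPochhammer_pos l c hc

lemma poch_neg_natCast (M l : ℕ) : poch (-M) l = (-1) ^ l * M.descFactorial l := by
  rw [poch_eq_ascPochhammer_eval, ascPochhammer_eval_neg_eq_descPochhammer,
    descPochhammer_eval_eq_descFactorial]

lemma Gamma_add_natCast_eq_mul_poch {c : ℝ} (hc : 0 < c) (l : ℕ) :
    Real.Gamma (c + l) = Real.Gamma c * poch c l := by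
  induction l with
  | zero => simp [poch]
  | succ l ih =>
    rw [Nat.cast_succ, ← add_assoc, Real.Gamma_add_one (by positivity), ih]
    simp only [poch, Finset.prod_range_succ]
    ring

-- `(c - b)_m` is the falling factorial of `-b + (c + m - 1)`; expand it by the binomial theorem
-- for falling factorials.
lemma sum_neg_one_pow_mul_choose_mul_poch_mul_poch (m : ℕ) (b c : ℝ) :
    ∑ l ∈ Finset.range (m + 1), (-1) ^ l * (m.choose l : ℝ) * poch b l * poch (c + l) (m - l)
      = poch (c - b) m := by
  have hdesc : ∀ (r : ℝ) (k : ℕ), (descPochhammer ℤ k).smeval r = poch (r - k + 1) k := by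
    intro r k
    rw [descPochhammer_smeval_eq_ascPochhammer, ascPochhammer_smeval_eq_eval,
      poch_eq_ascPochhammer_eval]
  have key := Ring.descPochhammer_smeval_add (R := ℝ) m (Commute.all (-b) (c + m - 1))
  rw [Finset.Nat.sum_antidiagonal_eq_sum_range_succ
    (fun i j => (m.choose i : ℝ) * ((descPochhammer ℤ i).smeval (-b) *
      (descPochhammer ℤ j).smeval (c + m - 1)))] at key
  rw [hdesc, show -b + (c + m - 1) - m + 1 = c - b by ring] at key
  rw [key]
  refine Finset.sum_congr rfl fun l hl => ?_
  have hlm : l ≤ m := Nat.lt_succ_iff.1 (Finset.mem_range.1 hl)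
  rw [hdesc, hdesc, Nat.cast_sub hlm, show c + m - 1 - (m - l) + 1 = c + l by ring,
    poch_eq_ascPochhammer_eval b, show b = -(-b - l + 1 - 1 + l) by ring,
    ascPochhammer_eval_neg_eq_descPochhammer, descPochhammer_eval_eq_ascPochhammer,
    ← poch_eq_ascPochhammer_eval]
  simp only [neg_neg]
  ring_nf
  simp [pow_mul']

/-- Chu–Vandermonde: `₂F₁(-m, b; c; 1) = (c - b)_m / (c)_m`. -/
lemma sum_poch_neg_mul_poch_div (m : ℕ) (b : ℝ) {c : ℝ} (hc : 0 < c) :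
    ∑ l ∈ Finset.range (m + 1), poch (-(m : ℝ)) l * poch b l / (poch c l * l.factorial)
      = poch (c - b) m / poch c m := by
  rw [eq_div_iff (poch_pos hc m).ne', Finset.sum_mul,
    ← sum_neg_one_pow_mul_choose_mul_poch_mul_poch m b c]
  refine Finset.sum_congr rfl fun l hl => ?_
  have hlm : l ≤ m := Nat.lt_succ_iff.1 (Finset.mem_range.1 hl)
  rw [poch_neg_natCast, Nat.descFactorial_eq_factorial_mul_choose, ← Nat.add_sub_cancel' hlm,
    poch_add, Nat.add_sub_cancel_left]
  have := poch_pos hc l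
  field_simp
  push_cast
  ring

lemma neg_one_pow_sub_eq_mul {N t : ℕ} (h : t ≤ N) : (-1 : ℝ) ^ (N - t) = (-1) ^ N * (-1) ^ t := by
  rw [pow_sub₀ _ (by norm_num) h, ← inv_pow, inv_neg_one]

lemma sum_neg_one_pow_mul_descFactorial_mul_descFactorial {n i j : ℕ} (hi : i ≤ n) (hj : j ≤ n) :
    ∑ k ∈ Finset.range (i + 1),
        (-1 : ℝ) ^ (n - k) * i.descFactorial k * (n - j).descFactorial (n - k)
      = if i = j then (-1 : ℝ) ^ (n - i) * i.factorial * (n - i).factorial else 0 := by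
  -- The terms with `k < j` vanish; writing `k = j + t`, the others are
  -- `(-1)^(n-j) i^{(j)} (n-j)! (-1)^t C(i-j, t)`.
  have hlow : ∀ k < j, (n - j).descFactorial (n - k) = 0 := fun k hk =>
    Nat.descFactorial_eq_zero_iff_lt.2 (by omega)
  rcases lt_or_ge i j with hij | hji
  · rw [if_neg hij.ne]
    refine Finset.sum_eq_zero fun k hk => ?_
    rw [hlow k (by simp at hk; omega)]
    simp
  obtain ⟨d, rfl⟩ := Nat.exists_eq_add_of_le hji
  have hterm : ∀ t ≤ d, (-1 : ℝ) ^ (n - (j + t)) * (j + d).descFactorial (j + t)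
        * (n - j).descFactorial (n - (j + t))
      = (-1) ^ (n - j) * (j + d).descFactorial j * (n - j).factorial * ((-1) ^ t * d.choose t) := by
    intro t ht
    have hdesc : (j + d).descFactorial (j + t) = d.descFactorial t * (j + d).descFactorial j := by
      rw [← Nat.descFactorial_mul_descFactorial (Nat.le_add_right j t)]
      simp
    have hfact : t.factorial * (n - j).descFactorial (n - j - t) = (n - j).factorial := by
      rw [← Nat.factorial_mul_descFactorial (by omega : n - j - t ≤ n - j)]
      congr 2
      omega
    rw [show n - (j + t) = n - j - t by omega, neg_one_pow_sub_eq_mul (by omega), hdesc,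
      Nat.descFactorial_eq_factorial_mul_choose, ← hfact]
    push_cast
    ring
  rw [show j + d + 1 = j + (d + 1) by ring, Finset.sum_range_add,
    Finset.sum_eq_zero fun k hk => by rw [hlow k (Finset.mem_range.1 hk)]; simp, zero_add,
    Finset.sum_congr rfl fun t ht => hterm t (Nat.lt_succ_iff.1 (Finset.mem_range.1 ht)),
    ← Finset.mul_sum]
  have halt : ∑ t ∈ Finset.range (d + 1), (-1 : ℝ) ^ t * d.choose t = if d = 0 then 1 else 0 := by
    exact_mod_cast Int.alternating_sum_range_choose (n := d)
  rw [halt]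
  rcases Nat.eq_zero_or_pos d with rfl | hd
  · simp [Nat.descFactorial_self]
  · rw [if_neg hd.ne', if_neg (by omega), mul_zero]

lemma sum_poch_div_poch_mul_poch_div_factorial {n i j : ℕ} (hi : i ≤ n) (hj : j ≤ n) :
    ∑ k ∈ Finset.range (i + 1),
        poch (-(i : ℝ)) k / poch (-(n : ℝ)) k * (poch ((j : ℝ) - n) (n - k) / (n - k).factorial)
      = if i = j then (-1 : ℝ) ^ (n - i) * i.factorial * (n - i).factorial / n.factorial
        else 0 := by
  have hterm : ∀ k ∈ Finset.range (i + 1),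
      poch (-(i : ℝ)) k / poch (-(n : ℝ)) k * (poch ((j : ℝ) - n) (n - k) / (n - k).factorial)
        = (-1 : ℝ) ^ (n - k) * i.descFactorial k * (n - j).descFactorial (n - k)
          / n.factorial := by
    intro k hk
    have hkn : k ≤ n := (Nat.lt_succ_iff.1 (Finset.mem_range.1 hk)).trans hi
    have : (n.descFactorial k : ℝ) ≠ 0 := by
      exact_mod_cast fun h => (Nat.descFactorial_eq_zero_iff_lt.1 h).not_ge hkn
    rw [poch_neg_natCast, poch_neg_natCast,
      show (j : ℝ) - n = -((n - j : ℕ) : ℝ) by push_cast [Nat.cast_sub hj]; ring,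
      poch_neg_natCast, ← Nat.factorial_mul_descFactorial hkn]
    push_cast
    field_simp
  rw [Finset.sum_congr rfl hterm, ← Finset.sum_div,
    sum_neg_one_pow_mul_descFactorial_mul_descFactorial hi hj]
  split_ifs <;> simp

lemma pow_eq_sum_bern {n m : ℕ} (hm : m ≤ n) (x : ℝ) :
    x ^ m = ∑ t ∈ Finset.range (n - m + 1),
      ((n - m).choose t / n.choose (m + t) : ℝ) * bern n (m + t) x := by
  calc x ^ m = x ^ m * (x + (1 - x)) ^ (n - m) := by simp
    _ = _ := by
      rw [add_pow, Finset.mul_sum]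
      refine Finset.sum_congr rfl fun t ht => ?_
      have ht : t ≤ n - m := Nat.lt_succ_iff.1 (Finset.mem_range.1 ht)
      have : (n.choose (m + t) : ℝ) ≠ 0 := by exact_mod_cast (Nat.choose_pos (by omega)).ne'
      rw [bern, show n - (m + t) = n - m - t by omega, pow_add]
      field_simp

@[fun_prop]
lemma continuous_bern (n j : ℕ) : Continuous (bern n j) := by
  unfold bern
  fun_prop

@[fun_prop]
lemma continuous_jacobiR (α β : ℝ) (k : ℕ) : Continuous (jacobiR α β k) := by
  unfold jacobiR
  fun_prop

section Beta

variable {a b : ℝ}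

lemma ofReal_one_sub_rpow_mul_rpow {x : ℝ} (hx : x ∈ Set.uIcc 0 1) :
    (((1 - x) ^ a * x ^ b : ℝ) : ℂ)
      = (x : ℂ) ^ ((b + 1 : ℝ) - 1 : ℂ) * (1 - (x : ℂ)) ^ ((a + 1 : ℝ) - 1 : ℂ) := by
  rw [Set.uIcc_of_le zero_le_one] at hx
  push_cast
  rw [add_sub_cancel_right, add_sub_cancel_right, mul_comm, ← Complex.ofReal_cpow hx.1,
    ← Complex.ofReal_one, ← Complex.ofReal_sub, ← Complex.ofReal_cpow (by linarith [hx.2])]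

lemma intervalIntegrable_one_sub_rpow_mul_rpow (ha : -1 < a) (hb : -1 < b) :
    IntervalIntegrable (fun x => (1 - x) ^ a * x ^ b) volume 0 1 := by
  have hC : IntervalIntegrable (fun x => (((1 - x) ^ a * x ^ b : ℝ) : ℂ)) volume 0 1 :=
    (Complex.betaIntegral_convergent (by simp; linarith) (by simp; linarith)).congr
      fun x hx => (ofReal_one_sub_rpow_mul_rpow (Set.uIoc_subset_uIcc hx)).symm
  have hre : Integrable (fun x : ℝ => (1 - x) ^ a * x ^ b) (volume.restrict (Set.Ioc 0 1)) := by
    simpa using hC.1.re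
  exact (intervalIntegrable_iff_integrableOn_Ioc_of_le zero_le_one).2 hre

lemma integral_one_sub_rpow_mul_rpow (ha : -1 < a) (hb : -1 < b) :
    ∫ x in (0 : ℝ)..1, (1 - x) ^ a * x ^ b
      = Real.Gamma (a + 1) * Real.Gamma (b + 1) / Real.Gamma (a + b + 2) := by
  apply Complex.ofReal_injective
  rw [← intervalIntegral.integral_ofReal,
    intervalIntegral.integral_congr fun x hx => ofReal_one_sub_rpow_mul_rpow hx,
    ← Complex.betaIntegral, Complex.betaIntegral_eq_Gamma_mul_div _ _ (by simp; linarith)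
      (by simp; linarith)]
  push_cast [← Complex.Gamma_ofReal]
  rw [mul_comm]
  ring_nf

lemma rpow_add_natCast_of_neg_one_lt {y c : ℝ} (hy : 0 ≤ y) (hc : -1 < c) (q : ℕ) :
    y ^ (c + q) = y ^ c * y ^ q := by
  rcases Nat.eq_zero_or_pos q with rfl | hq
  · simp
  · have : (1 : ℝ) ≤ q := by exact_mod_cast hq
    exact Real.rpow_add_natCast' hy (by linarith)

lemma intervalIntegrable_weight_mul (ha : -1 < a) (hb : -1 < b) {g : ℝ → ℝ}
    (hg : ContinuousOn g (Set.uIcc 0 1)) :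
    IntervalIntegrable (fun x => (1 - x) ^ a * x ^ b * g x) volume 0 1 :=
  (intervalIntegrable_one_sub_rpow_mul_rpow ha hb).mul_continuousOn hg

lemma integral_weight_mul_sum (ha : -1 < a) (hb : -1 < b) {ι : Type*} (s : Finset ι)
    (c : ι → ℝ) {g : ι → ℝ → ℝ} (hg : ∀ l ∈ s, ContinuousOn (g l) (Set.uIcc 0 1)) :
    ∫ x in (0 : ℝ)..1, (1 - x) ^ a * x ^ b * ∑ l ∈ s, c l * g l x
      = ∑ l ∈ s, c l * ∫ x in (0 : ℝ)..1, (1 - x) ^ a * x ^ b * g l x := by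
  simp_rw [Finset.mul_sum, mul_left_comm _ (c _)]
  rw [intervalIntegral.integral_finsetSum fun l hl =>
    (intervalIntegrable_weight_mul ha hb (hg l hl)).const_mul (c l)]
  simp_rw [intervalIntegral.integral_const_mul]

lemma integral_weight_mul_pow_mul_one_sub_pow (ha : -1 < a) (hb : -1 < b) (p q : ℕ) :
    ∫ x in (0 : ℝ)..1, (1 - x) ^ a * x ^ b * (x ^ p * (1 - x) ^ q)
      = Real.Gamma (a + 1) * Real.Gamma (b + 1) / Real.Gamma (a + b + 2)
          * (poch (a + 1) q * poch (b + 1) p / poch (a + b + 2) (p + q)) := by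
  have hq : -1 < a + q := by linarith [(Nat.cast_nonneg q : (0 : ℝ) ≤ q)]
  have hp : -1 < b + p := by linarith [(Nat.cast_nonneg p : (0 : ℝ) ≤ p)]
  have hmerge : ∀ x ∈ Set.uIcc (0 : ℝ) 1, (1 - x) ^ a * x ^ b * (x ^ p * (1 - x) ^ q)
      = (1 - x) ^ (a + q) * x ^ (b + p) := fun x hx => by
    rw [Set.uIcc_of_le zero_le_one] at hx
    rw [rpow_add_natCast_of_neg_one_lt hx.1 hb,
      rpow_add_natCast_of_neg_one_lt (sub_nonneg.2 hx.2) ha]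
    ring
  rw [intervalIntegral.integral_congr hmerge, integral_one_sub_rpow_mul_rpow hq hp]
  have ha1 : 0 < a + 1 := by linarith
  have hb1 : 0 < b + 1 := by linarith
  have hab : 0 < a + b + 2 := by linarith
  rw [show a + q + 1 = a + 1 + q by ring, show b + p + 1 = b + 1 + p by ring,
    show a + q + (b + p) + 2 = a + b + 2 + (p + q : ℕ) by push_cast; ring,
    Gamma_add_natCast_eq_mul_poch ha1, Gamma_add_natCast_eq_mul_poch hb1,
    Gamma_add_natCast_eq_mul_poch hab]
  have := poch_pos hab (p + q)
  have := Real.Gamma_pos_of_pos hab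
  field_simp

end Beta

lemma integral_weight_mul_bern_mul_jacobiR {α β : ℝ} (hα : -1 < α) (hβ : -1 < β) {n j k : ℕ}
    (hj : j ≤ n) (hk : k ≤ n) :
    ∫ x in (0 : ℝ)..1, (1 - x) ^ α * x ^ β * bern n j x * jacobiR α (β + k + 1) (n - k) x
      = Real.Gamma (α + 1) * Real.Gamma (β + 1) / Real.Gamma (α + β + 2)
          * (n.choose j * poch (β + 1) j * poch (α + 1) (n - j) / poch (α + β + 2) n)
          * (poch ((j : ℝ) - n) (n - k) / (n - k).factorial) := by
  set K := Real.Gamma (α + 1) * Real.Gamma (β + 1) / Real.Gamma (α + β + 2)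
  set A := poch (α + 1) (n - k) / (n - k).factorial
  set coef : ℕ → ℝ := fun l =>
    poch (-((n - k : ℕ) : ℝ)) l * poch (α + β + 2 + n) l / (poch (α + 1) l * l.factorial)
  have hexpand : ∀ x, (1 - x) ^ α * x ^ β * bern n j x * jacobiR α (β + k + 1) (n - k) x
      = (1 - x) ^ α * x ^ β * ∑ l ∈ Finset.range (n - k + 1),
          (n.choose j * A * coef l) * (x ^ j * (1 - x) ^ (n - j + l)) := by
    intro x
    rw [jacobiR, bern, show ((n - k : ℕ) : ℝ) + α + (β + k + 1) + 1 = α + β + 2 + n by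
      push_cast [Nat.cast_sub hk]; ring, Finset.mul_sum, Finset.mul_sum, Finset.mul_sum]
    refine Finset.sum_congr rfl fun l _ => ?_
    rw [pow_add]
    ring
  have hα1 : 0 < α + 1 := by linarith
  have hab : 0 < α + β + 2 := by linarith
  have hterm : ∀ l ∈ Finset.range (n - k + 1),
      n.choose j * A * coef l * (K * (poch (α + 1) (n - j + l) * poch (β + 1) j
        / poch (α + β + 2) (j + (n - j + l))))
      = K * (n.choose j * poch (β + 1) j * poch (α + 1) (n - j) / poch (α + β + 2) n) * A
          * (poch (-((n - k : ℕ) : ℝ)) l * poch (α + 1 + (n - j : ℕ)) l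
            / (poch (α + 1) l * l.factorial)) := by
    intro l _
    rw [← add_assoc, Nat.add_sub_cancel' hj, poch_add, poch_add, Nat.cast_sub hj]
    have := poch_pos hab n
    have := poch_pos (show 0 < α + β + 2 + n by positivity) l
    have := poch_pos hα1 l
    simp only [coef]
    field_simp
  rw [intervalIntegral.integral_congr fun x _ => hexpand x,
    integral_weight_mul_sum hα hβ _ _ fun l _ => by fun_prop]
  simp_rw [integral_weight_mul_pow_mul_one_sub_pow hα hβ]
  rw [Finset.sum_congr rfl hterm, ← Finset.mul_sum, sum_poch_neg_mul_poch_div _ _ hα1,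
    show α + 1 - (α + 1 + ((n - j : ℕ) : ℝ)) = (j : ℝ) - n by push_cast [Nat.cast_sub hj]; ring]
  have := poch_pos hα1 (n - k)
  simp only [A]
  field_simp

section Uniqueness

variable {α β : ℝ}

lemma eq_zero_of_integral_weight_mul_self_eq_zero (hα : -1 < α) (hβ : -1 < β) {P : ℝ[X]}
    (h : ∫ x in (0 : ℝ)..1, (1 - x) ^ α * x ^ β * (P.eval x * P.eval x) = 0) : P = 0 := by
  set F : ℝ → ℝ := fun x => (1 - x) ^ α * x ^ β * (P.eval x * P.eval x)
  have hnonneg : 0 ≤ᵐ[volume.restrict (Set.Ioc 0 1)] F := by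
    refine (ae_restrict_iff' measurableSet_Ioc).2 (Filter.Eventually.of_forall fun x hx => ?_)
    have := Real.rpow_nonneg (sub_nonneg.2 hx.2) α
    have := Real.rpow_nonneg hx.1.le β
    exact mul_nonneg (by positivity) (mul_self_nonneg _)
  have hF : F =ᵐ[volume.restrict (Set.Ioc 0 1)] 0 :=
    (intervalIntegral.integral_eq_zero_iff_of_le_of_nonneg_ae zero_le_one hnonneg
      (intervalIntegrable_weight_mul hα hβ (by fun_prop))).1 h
  have hcont : ContinuousOn F (Set.Ioo 0 1) := by
    refine ContinuousOn.mul (ContinuousOn.mul ?_ ?_) (by fun_prop)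
    · exact (continuousOn_const.sub continuousOn_id).rpow_const fun x hx =>
        Or.inl (sub_pos.2 hx.2).ne'
    · exact continuousOn_id.rpow_const fun x hx => Or.inl hx.1.ne'
  have hzero : Set.EqOn F 0 (Set.Ioo 0 1) :=
    Measure.eqOn_open_of_ae_eq (ae_restrict_of_ae_restrict_of_subset Set.Ioo_subset_Ioc_self hF)
      isOpen_Ioo hcont continuousOn_const
  refine P.eq_zero_of_infinite_isRoot ((Set.Ioo_infinite zero_lt_one).mono fun x hx => ?_)
  have hw : 0 < (1 - x) ^ α * x ^ β :=
    mul_pos (Real.rpow_pos_of_pos (by linarith [hx.2]) α) (Real.rpow_pos_of_pos hx.1 β)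
  have := hzero hx
  simp only [F, Pi.zero_apply, mul_eq_zero, hw.ne', false_or, or_self] at this
  exact this

lemma eq_zero_of_integral_weight_mul_bern_mul_eq_zero (hα : -1 < α) (hβ : -1 < β) {n : ℕ}
    {P : ℝ[X]} (hP : P.natDegree ≤ n)
    (h : ∀ j ≤ n, ∫ x in (0 : ℝ)..1, (1 - x) ^ α * x ^ β * bern n j x * P.eval x = 0) :
    P = 0 := by
  have hmono : ∀ m ≤ n, ∫ x in (0 : ℝ)..1, (1 - x) ^ α * x ^ β * (x ^ m * P.eval x) = 0 := by
    intro m hm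
    have hexpand : ∀ x, (1 - x) ^ α * x ^ β * (x ^ m * P.eval x)
        = (1 - x) ^ α * x ^ β * ∑ t ∈ Finset.range (n - m + 1),
          ((n - m).choose t / n.choose (m + t) : ℝ) * (bern n (m + t) x * P.eval x) := by
      intro x
      rw [pow_eq_sum_bern hm, Finset.sum_mul]
      exact congrArg _ (Finset.sum_congr rfl fun _ _ => mul_assoc _ _ _)
    rw [intervalIntegral.integral_congr fun x _ => hexpand x,
      integral_weight_mul_sum hα hβ _ _ fun t _ => by fun_prop]
    refine Finset.sum_eq_zero fun t ht => ?_
    have ht : t ≤ n - m := Nat.lt_succ_iff.1 (Finset.mem_range.1 ht)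
    simp_rw [← mul_assoc, h (m + t) (by omega), mul_zero]
  have hexpand : ∀ x, P.eval x * P.eval x
      = ∑ m ∈ Finset.range (n + 1), P.coeff m * (x ^ m * P.eval x) := by
    intro x
    nth_rw 1 [P.eval_eq_sum_range' (Nat.lt_succ_of_le hP), Finset.sum_mul]
    exact Finset.sum_congr rfl fun _ _ => mul_assoc _ _ _
  refine eq_zero_of_integral_weight_mul_self_eq_zero hα hβ ?_
  simp_rw [hexpand]
  rw [integral_weight_mul_sum hα hβ _ _ fun m _ => by fun_prop]
  exact Finset.sum_eq_zero fun m hm => by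
    rw [hmono m (Nat.lt_succ_iff.1 (Finset.mem_range.1 hm)), mul_zero]

lemma eq_of_integral_weight_mul_bern_mul_eq (hα : -1 < α) (hβ : -1 < β) {n : ℕ}
    {P Q : ℝ[X]} (hP : P.natDegree ≤ n) (hQ : Q.natDegree ≤ n)
    (h : ∀ j ≤ n, ∫ x in (0 : ℝ)..1, (1 - x) ^ α * x ^ β * bern n j x * P.eval x
      = ∫ x in (0 : ℝ)..1, (1 - x) ^ α * x ^ β * bern n j x * Q.eval x) :
    P = Q := by
  have hint : ∀ (j : ℕ) (R : ℝ[X]),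
      IntervalIntegrable (fun x => (1 - x) ^ α * x ^ β * bern n j x * R.eval x) volume 0 1 :=
    fun j R => by
      simpa only [mul_assoc] using intervalIntegrable_weight_mul hα hβ
        (g := fun x => bern n j x * R.eval x) (by fun_prop)
  refine sub_eq_zero.1 (eq_zero_of_integral_weight_mul_bern_mul_eq_zero hα hβ
    ((natDegree_sub_le _ _).trans (max_le hP hQ)) fun j hj => ?_)
  simp_rw [eval_sub, mul_sub]
  rw [intervalIntegral.integral_sub (hint j P) (hint j Q), h j hj, sub_self]

end Uniqueness

noncomputable def jacobiRPoly (α β : ℝ) (k : ℕ) : ℝ[X] :=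
  C (poch (α + 1) k / k.factorial) *
    ∑ l ∈ Finset.range (k + 1),
      C (poch (-(k : ℝ)) l * poch ((k : ℝ) + α + β + 1) l / (poch (α + 1) l * l.factorial)) *
        (1 - X) ^ l

lemma eval_jacobiRPoly (α β : ℝ) (k : ℕ) (x : ℝ) :
    (jacobiRPoly α β k).eval x = jacobiR α β k x := by
  simp [jacobiRPoly, jacobiR, eval_finsetSum]

lemma natDegree_jacobiRPoly_le (α β : ℝ) (k : ℕ) : (jacobiRPoly α β k).natDegree ≤ k := by
  refine (natDegree_C_mul_le _ _).trans (natDegree_sum_le_of_forall_le _ _ fun l hl => ?_)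
  refine (natDegree_C_mul_le _ _).trans ((natDegree_pow_le_of_le (m := 1) l ?_).trans ?_)
  · exact (natDegree_sub_le _ _).trans (by simp)
  · simpa using Nat.lt_succ_iff.1 (Finset.mem_range.1 hl)

/-- The right-hand side of the short expansion, as a polynomial. -/
noncomputable def dualBernsteinExpansion (n : ℕ) (α β : ℝ) (i : ℕ) : ℝ[X] :=
  C ((-1) ^ (n - i) * poch (α + β + 2) n /
      ((Real.Gamma (α + 1) * Real.Gamma (β + 1) / Real.Gamma (α + β + 2)) * poch (α + 1) (n - i)
        * poch (β + 1) i)) *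
    ∑ k ∈ Finset.range (i + 1),
      C (poch (-(i : ℝ)) k / poch (-(n : ℝ)) k) * jacobiRPoly α (β + k + 1) (n - k)

lemma eval_dualBernsteinExpansion (n : ℕ) (α β : ℝ) (i : ℕ) (x : ℝ) :
    (dualBernsteinExpansion n α β i).eval x
      = ((-1) ^ (n - i) * poch (α + β + 2) n /
          ((Real.Gamma (α + 1) * Real.Gamma (β + 1) / Real.Gamma (α + β + 2))
            * poch (α + 1) (n - i) * poch (β + 1) i)) *
        ∑ k ∈ Finset.range (i + 1),
          poch (-(i : ℝ)) k / poch (-(n : ℝ)) k * jacobiR α (β + k + 1) (n - k) x := by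
  simp [dualBernsteinExpansion, eval_finsetSum, eval_jacobiRPoly]

lemma natDegree_dualBernsteinExpansion_le (n : ℕ) (α β : ℝ) (i : ℕ) :
    (dualBernsteinExpansion n α β i).natDegree ≤ n := by
  refine (natDegree_C_mul_le _ _).trans (natDegree_sum_le_of_forall_le _ _ fun k _ => ?_)
  exact (natDegree_C_mul_le _ _).trans ((natDegree_jacobiRPoly_le _ _ _).trans (Nat.sub_le n k))

lemma dualBernsteinExpansion_normalization {α β : ℝ} (hα : -1 < α) (hβ : -1 < β) {n i : ℕ}
    (hi : i ≤ n) :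
    (-1) ^ (n - i) * poch (α + β + 2) n /
        ((Real.Gamma (α + 1) * Real.Gamma (β + 1) / Real.Gamma (α + β + 2))
          * poch (α + 1) (n - i) * poch (β + 1) i)
      * (Real.Gamma (α + 1) * Real.Gamma (β + 1) / Real.Gamma (α + β + 2))
      * (n.choose i * poch (β + 1) i * poch (α + 1) (n - i) / poch (α + β + 2) n)
      * ((-1) ^ (n - i) * i.factorial * (n - i).factorial / n.factorial) = 1 := by
  have hα1 : 0 < α + 1 := by linarith
  have hβ1 : 0 < β + 1 := by linarith
  have hab : 0 < α + β + 2 := by linarith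
  have := Real.Gamma_pos_of_pos hα1
  have := Real.Gamma_pos_of_pos hβ1
  have := Real.Gamma_pos_of_pos hab
  have := poch_pos hα1 (n - i)
  have := poch_pos hβ1 i
  have := poch_pos hab n
  have hchoose : (n.choose i * i.factorial * (n - i).factorial : ℝ) = n.factorial := by
    exact_mod_cast Nat.choose_mul_factorial_mul_factorial hi
  have hsign : ((-1 : ℝ) ^ (n - i)) ^ 2 = 1 := by rw [← pow_mul, pow_mul', neg_one_sq, one_pow]
  field_simp
  linear_combination (n.choose i * i.factorial * (n - i).factorial : ℝ) * hsign + hchoose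

lemma integral_weight_mul_bern_mul_dualBernsteinExpansion {α β : ℝ} (hα : -1 < α) (hβ : -1 < β)
    {n i j : ℕ} (hi : i ≤ n) (hj : j ≤ n) :
    ∫ x in (0 : ℝ)..1, (1 - x) ^ α * x ^ β * bern n j x * (dualBernsteinExpansion n α β i).eval x
      = if j = i then 1 else 0 := by
  set K := Real.Gamma (α + 1) * Real.Gamma (β + 1) / Real.Gamma (α + β + 2)
  set c := (-1) ^ (n - i) * poch (α + β + 2) n / (K * poch (α + 1) (n - i) * poch (β + 1) i)
  set G := n.choose j * poch (β + 1) j * poch (α + 1) (n - j) / poch (α + β + 2) n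
  have hexpand : ∀ x, (1 - x) ^ α * x ^ β * bern n j x * (dualBernsteinExpansion n α β i).eval x
      = (1 - x) ^ α * x ^ β * ∑ k ∈ Finset.range (i + 1),
          (c * (poch (-(i : ℝ)) k / poch (-(n : ℝ)) k))
            * (bern n j x * jacobiR α (β + k + 1) (n - k) x) := by
    intro x
    rw [eval_dualBernsteinExpansion, Finset.mul_sum, Finset.mul_sum, Finset.mul_sum]
    exact Finset.sum_congr rfl fun _ _ => by ring
  have hmoment : ∀ k ∈ Finset.range (i + 1),
      c * (poch (-(i : ℝ)) k / poch (-(n : ℝ)) k) * ∫ x in (0 : ℝ)..1,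
          (1 - x) ^ α * x ^ β * (bern n j x * jacobiR α (β + k + 1) (n - k) x)
        = c * K * G * (poch (-(i : ℝ)) k / poch (-(n : ℝ)) k
          * (poch ((j : ℝ) - n) (n - k) / (n - k).factorial)) := by
    intro k hk
    simp_rw [← mul_assoc]
    rw [integral_weight_mul_bern_mul_jacobiR hα hβ hj
      ((Nat.lt_succ_iff.1 (Finset.mem_range.1 hk)).trans hi)]
    ring
  rw [intervalIntegral.integral_congr fun x _ => hexpand x,
    integral_weight_mul_sum hα hβ _ _ fun k _ => by fun_prop, Finset.sum_congr rfl hmoment,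
    ← Finset.mul_sum, sum_poch_div_poch_mul_poch_div_factorial hi hj]
  rcases eq_or_ne i j with rfl | hij
  · simpa only [if_true] using dualBernsteinExpansion_normalization hα hβ hi
  · rw [if_neg hij, if_neg hij.symm, mul_zero]

/-- Short expansion of dual Bernstein polynomials in shifted Jacobi polynomials
with shifted parameters. -/
theorem dualBernstein_short_expansion (n : ℕ) (α β : ℝ) (hα : α > -1) (hβ : β > -1)
    (D : ℕ → Polynomial ℝ) (hD : IsDualBernstein n α β D)
    (i : ℕ) (hi : i ≤ n) (x : ℝ) :
    (D i).eval x
      = ((-1)^(n-i) * poch (α+β+2) n /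
          ((Real.Gamma (α+1) * Real.Gamma (β+1) / Real.Gamma (α+β+2)) * poch (α+1) (n-i) * poch (β+1) i)) *
        ∑ k ∈ Finset.range (i+1),
          poch (-(i:ℝ)) k / poch (-(n:ℝ)) k * jacobiR α (β+k+1) (n-k) x := by
  have hDi : D i = dualBernsteinExpansion n α β i :=
    eq_of_integral_weight_mul_bern_mul_eq hα hβ (hD.1 i hi)
      (natDegree_dualBernsteinExpansion_le n α β i) fun j hj =>
        (hD.2 j hj i hi).trans
          (integral_weight_mul_bern_mul_dualBernsteinExpansion hα hβ hi hj).symm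
  rw [hDi, eval_dualBernsteinExpansion]
end

section
/- For integers n ≥ 0 and 0 ≤ i, j ≤ n, the hypergeometric sums F(i,j) := Σ_{l=0}^{min(n-j,i)} [(j-n)_l (-i)_l l!] / [(-n)_l (-n-α)_l l!] satisfy the first-order non-homogeneous recurrence (i-n)(n-i+α) F(i+1, j) - (i+1)(n+j-i+α+1) F(i,j) = -(n+1)(n+α+1), with the convention F(n+1, j) := 0. -/
open scoped BigOperators
open MeasureTheory Polynomial

/-- The terminating hypergeometric sum `F(i,j) = ₃F₂(j-n, -i, 1; -n, -n-α; 1)`. -/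
noncomputable def hyperF (α : ℝ) (n i j : ℕ) : ℝ :=
  ∑ l ∈ Finset.range (min (n - j) i + 1),
    poch ((j:ℝ) - n) l * poch (-(i:ℝ)) l * (Nat.factorial l) /
      (poch (-(n:ℝ)) l * poch (-(n:ℝ) - α) l * (Nat.factorial l))


lemma poch_succ (c : ℝ) (l : ℕ) : poch c (l+1) = poch c l * (c + l) := by
  simp [poch, Finset.prod_range_succ]

lemma poch_succ' (c : ℝ) (l : ℕ) : poch c (l+1) = c * poch (c+1) l := by
  rw [poch, Finset.prod_range_succ', mul_comm]
  congr 1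
  · push_cast; simp
  · refine Finset.prod_congr rfl fun x _ => ?_
    push_cast; ring

lemma poch_eq_zero (c : ℝ) (l m : ℕ) (hm : m < l) (h : c + m = 0) : poch c l = 0 :=
  Finset.prod_eq_zero (Finset.mem_range.2 hm) h

lemma poch_neg_ne (n l : ℕ) (h : l ≤ n) : poch (-(n:ℝ)) l ≠ 0 := by
  refine Finset.prod_ne_zero_iff.2 fun m hm => ?_
  have hm' := Finset.mem_range.1 hm
  have : (m:ℝ) < n := by exact_mod_cast lt_of_lt_of_le hm' h
  intro hc; linarith

lemma poch_neg_alpha_ne (α : ℝ) (hα : α > -1) (n l : ℕ) (h : l ≤ n) :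
    poch (-(n:ℝ) - α) l ≠ 0 := by
  refine Finset.prod_ne_zero_iff.2 fun m hm => ?_
  have hm' := Finset.mem_range.1 hm
  have : (m:ℝ) + 1 ≤ n := by exact_mod_cast Nat.succ_le_of_lt (lt_of_lt_of_le hm' h)
  intro hc; linarith

lemma poch_shift (i l : ℕ) :
    poch (-(i:ℝ)-1) l * (-(i:ℝ)-1+l) = (-(i:ℝ)-1) * poch (-(i:ℝ)) l := by
  have h1 := poch_succ (-(i:ℝ)-1) l
  have h2 := poch_succ' (-(i:ℝ)-1) l
  have h3 : (-(i:ℝ)-1+1) = -(i:ℝ) := by ring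
  rw [h3] at h2
  rw [← h1, h2]

lemma hyperF_eq_sum (α : ℝ) (n i j : ℕ) (hi : i ≤ n) (hj : j ≤ n) :
    hyperF α n i j = ∑ l ∈ Finset.range (n + 1),
      poch ((j:ℝ) - n) l * poch (-(i:ℝ)) l /
        (poch (-(n:ℝ)) l * poch (-(n:ℝ) - α) l) := by
  have hsub : Finset.range (min (n - j) i + 1) ⊆ Finset.range (n + 1) :=
    Finset.range_subset_range.2 (by omega)
  have hzero : ∀ l ∈ Finset.range (n + 1), l ∉ Finset.range (min (n - j) i + 1) →
      poch ((j:ℝ) - n) l * poch (-(i:ℝ)) l * (Nat.factorial l) /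
        (poch (-(n:ℝ)) l * poch (-(n:ℝ) - α) l * (Nat.factorial l)) = 0 := by
    intro l hl hl'
    have h1 : min (n - j) i < l := by
      simp only [Finset.mem_range] at hl hl'; omega
    rcases min_lt_iff.1 h1 with h2 | h2
    · have hz : poch ((j:ℝ) - n) l = 0 := by
        refine poch_eq_zero _ _ (n - j) h2 ?_
        push_cast [Nat.cast_sub hj]; ring
      rw [hz]; simp
    · have hz : poch (-(i:ℝ)) l = 0 := by
        refine poch_eq_zero _ _ i h2 ?_; ring
      rw [hz]; simp
  rw [hyperF, Finset.sum_subset hsub hzero]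
  refine Finset.sum_congr rfl fun l _ => ?_
  have hf : ((Nat.factorial l : ℝ)) ≠ 0 := by positivity
  rw [mul_div_mul_right _ _ hf]

lemma key_step (α : ℝ) (hα : α > -1) (n i j l : ℕ) (hi : i ≤ n) (hj : j ≤ n) (hl : l ≤ n) :
    ((i:ℝ) - n)*((n:ℝ) - i + α) *
        (poch ((j:ℝ)-n) l * poch (-(i:ℝ)-1) l / (poch (-(n:ℝ)) l * poch (-(n:ℝ)-α) l))
      - ((i:ℝ)+1)*((n:ℝ) + j - i + α + 1) *
        (poch ((j:ℝ)-n) l * poch (-(i:ℝ)) l / (poch (-(n:ℝ)) l * poch (-(n:ℝ)-α) l))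
    = (((l:ℝ)+1)-n-1)*(((l:ℝ)+1)-n-α-1) *
        (poch ((j:ℝ)-n) (l+1) * poch (-(i:ℝ)-1) (l+1) /
          (poch (-(n:ℝ)) (l+1) * poch (-(n:ℝ)-α) (l+1)))
      - ((l:ℝ)-n-1)*((l:ℝ)-n-α-1) *
        (poch ((j:ℝ)-n) l * poch (-(i:ℝ)-1) l / (poch (-(n:ℝ)) l * poch (-(n:ℝ)-α) l)) := by
  have hN := poch_neg_ne n l hl
  have hNa := poch_neg_alpha_ne α hα n l hl
  have key2 : (((l:ℝ)+1)-n-1)*(((l:ℝ)+1)-n-α-1) *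
      (poch ((j:ℝ)-n) (l+1) * poch (-(i:ℝ)-1) (l+1) /
        (poch (-(n:ℝ)) (l+1) * poch (-(n:ℝ)-α) (l+1)))
      = ((j:ℝ) - n + l) * (-(i:ℝ)-1+l) *
        (poch ((j:ℝ)-n) l * poch (-(i:ℝ)-1) l) / (poch (-(n:ℝ)) l * poch (-(n:ℝ)-α) l) := by
    rw [poch_succ, poch_succ, poch_succ, poch_succ]
    rcases lt_or_eq_of_le hl with hlt | heq
    · have h1 : (-(n:ℝ) + l) ≠ 0 := by
        have : (l:ℝ) < n := by exact_mod_cast hlt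
        intro hc; linarith
      have h2 : (-(n:ℝ) - α + l) ≠ 0 := by
        have : (l:ℝ) + 1 ≤ n := by exact_mod_cast Nat.succ_le_of_lt hlt
        intro hc; linarith
      field_simp
      ring
    · subst heq
      have hz : ((j:ℝ) - l + l) * (poch ((j:ℝ)-l) l * poch (-(i:ℝ)-1) l) = 0 := by
        rcases Nat.eq_zero_or_pos j with hj0 | hj1
        · subst hj0; simp
        · have : poch ((j:ℝ)-l) l = 0 := by
            refine poch_eq_zero _ _ (l - j) (by omega) ?_
            push_cast [Nat.cast_sub hj]; ring
          rw [this]; ring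
      have hl0 : ((l:ℝ)+1-l-1) = 0 := by ring
      rw [hl0]
      rw [zero_mul, zero_mul]
      rw [show ((j:ℝ) - l + l) * (-(i:ℝ)-1+l) * (poch ((j:ℝ)-l) l * poch (-(i:ℝ)-1) l)
          = (-(i:ℝ)-1+l) * (((j:ℝ) - l + l) * (poch ((j:ℝ)-l) l * poch (-(i:ℝ)-1) l)) by ring,
        hz]
      simp
  rw [key2]
  have h3 := poch_shift i l
  field_simp
  linear_combination (-(((n:ℝ) + j - i + α + 1) * poch ((j:ℝ)-n) l)) * h3

/-- First-order non-homogeneous recurrence for the hypergeometric sums `F(i,j)`,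
with the convention `F(n+1,j) := 0`. -/
theorem hyperF_recurrence (α : ℝ) (hα : α > -1) (n i j : ℕ) (hi : i ≤ n) (hj : j ≤ n) :
    ((i:ℝ) - n)*((n:ℝ) - i + α) * (if i + 1 ≤ n then hyperF α n (i+1) j else 0)
      - ((i:ℝ)+1)*((n:ℝ) + j - i + α + 1) * hyperF α n i j
      = -((n:ℝ)+1)*((n:ℝ)+α+1) := by
  set A : ℝ := ((i:ℝ) - n)*((n:ℝ) - i + α) with hA
  set B : ℝ := ((i:ℝ)+1)*((n:ℝ) + j - i + α + 1) with hB
  set S : ℕ → ℝ := fun l =>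
    poch ((j:ℝ)-n) l * poch (-(i:ℝ)-1) l / (poch (-(n:ℝ)) l * poch (-(n:ℝ)-α) l) with hS
  set T : ℕ → ℝ := fun l =>
    poch ((j:ℝ)-n) l * poch (-(i:ℝ)) l / (poch (-(n:ℝ)) l * poch (-(n:ℝ)-α) l) with hT
  set G : ℕ → ℝ := fun l => ((l:ℝ)-n-1)*((l:ℝ)-n-α-1) * S l with hG
  have htele : ∀ l ∈ Finset.range (n+1), A * S l - B * T l = G (l+1) - G l := by
    intro l hl
    have hl' : l ≤ n := Nat.lt_succ_iff.1 (Finset.mem_range.1 hl)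
    have hks := key_step α hα n i j l hi hj hl'
    simp only [hS, hT, hG, hA, hB]
    push_cast
    convert hks using 3
  have hsum : A * (∑ l ∈ Finset.range (n+1), S l) - B * (∑ l ∈ Finset.range (n+1), T l)
      = G (n+1) - G 0 := by
    rw [Finset.mul_sum, Finset.mul_sum, ← Finset.sum_sub_distrib,
      Finset.sum_congr rfl htele, Finset.sum_range_sub]
  have hG1 : G (n+1) = 0 := by
    simp only [hG]
    have : ((n+1:ℕ):ℝ) - n - 1 = 0 := by push_cast; ring
    rw [this, zero_mul, zero_mul]
  have hG0 : G 0 = ((n:ℝ)+1)*((n:ℝ)+α+1) := by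
    simp only [hG, hS, poch]
    norm_num
    ring
  have hFi : hyperF α n i j = ∑ l ∈ Finset.range (n+1), T l := hyperF_eq_sum α n i j hi hj
  by_cases hc : i + 1 ≤ n
  · rw [if_pos hc]
    have hFi1 : hyperF α n (i+1) j = ∑ l ∈ Finset.range (n+1), S l := by
      rw [hyperF_eq_sum α n (i+1) j hc hj]
      refine Finset.sum_congr rfl fun l _ => ?_
      have hcast : (-(↑(i+1):ℝ)) = -(i:ℝ)-1 := by push_cast; ring
      rw [hS, hcast]
    rw [hFi1, hFi, hsum, hG1, hG0]; ring
  · have hin : i = n := by omega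
    rw [if_neg hc, mul_zero]
    have hA0 : A = 0 := by rw [hA, hin]; ring
    have h2 : A * (∑ l ∈ Finset.range (n+1), S l) = 0 := by rw [hA0]; ring
    rw [hFi]
    calc 0 - B * (∑ l ∈ Finset.range (n+1), T l)
        = A * (∑ l ∈ Finset.range (n+1), S l) - B * (∑ l ∈ Finset.range (n+1), T l) := by
          rw [h2]
      _ = G (n+1) - G 0 := hsum
      _ = -((n:ℝ)+1)*((n:ℝ)+α+1) := by rw [hG1, hG0]; ring
end

section
/- For 0 ≤ i ≤ n, the dual Bernstein polynomials satisfy x(x-1) D''^n_i(x) + (1/2)(α-β+(σ+1)(2x-1)) D'^n_i(x) = (i-n)(i+β+1) D^n_{i+1}(x) + i(i-α-n-1) D^n_{i-1}(x) - [i(i-α-n-1) + (i-n)(i+β+1)] D^n_i(x), where σ = α+β+1, D^n_i = D^n_i(·; α, β), and D^n_{-1} := D^n_{n+1} := 0. -/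
/-!
The Jacobi operator `J p = x (1 - x) p'' + (β + 1 - (α + β + 2) x) p'` is symmetric for the
weighted inner product `⟨f, g⟩ = ∫₀¹ (1 - x)^α x^β f g` (integrate by parts: the boundary terms
carry the factor `x^(β+1) (1 - x)^(α+1)`, which vanishes at both ends), and it is tridiagonal on
the Bernstein basis: `J Bⱼ` is a combination of `Bⱼ₋₁, Bⱼ, Bⱼ₊₁`. By symmetry and
biorthogonality the Bernstein moments `⟨Bₖ, J Dᵢ⟩ = ⟨J Bₖ, Dᵢ⟩` are the transposed tridiagonal
coefficients, and a polynomial of degree `≤ n` is determined by its Bernstein moments, so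
`J Dᵢ` is a combination of `Dᵢ₋₁, Dᵢ, Dᵢ₊₁`. The left-hand side of the theorem is `-J Dᵢ`.
-/

open scoped BigOperators
open MeasureTheory Polynomial

open Module Set

theorem eq_of_biorthogonal {ι K M : Type*} [Fintype ι] [DecidableEq ι] [Field K]
    [AddCommGroup M] [Module K M] {V : Submodule K M} [FiniteDimensional K V]
    (hV : finrank K V = Fintype.card ι) {d : ι → M} (hd : ∀ i, d i ∈ V)
    {φ : ι → M →ₗ[K] K} (hφ : ∀ i j, φ i (d j) = if i = j then 1 else 0)
    {v w : M} (hv : v ∈ V) (hw : w ∈ V) (h : ∀ i, φ i v = φ i w) : v = w := by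
  have hcoeff : ∀ c : ι → K, ∀ i, φ i (∑ j, c j • d j) = c i := fun c i => by simp [hφ]
  have hli : LinearIndependent K d := Fintype.linearIndependent_iff.mpr fun c hc i => by
    simpa [hc] using (hcoeff c i).symm
  have hspan : Submodule.span K (range d) = V :=
    Submodule.eq_of_le_of_finrank_eq (Submodule.span_le.mpr (range_subset_iff.mpr hd))
      (by rw [finrank_span_eq_card hli, hV])
  obtain ⟨c, hc⟩ := Submodule.mem_span_range_iff_exists_fun K |>.mp
    (hspan ▸ V.sub_mem hv hw)
  have hc0 : c = 0 := funext fun i => by rw [← hcoeff c i, hc, map_sub, h, sub_self]; rfl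
  rw [← sub_eq_zero, ← hc, hc0]
  simp

theorem Polynomial.natDegree_X_mul_derivative_le {R : Type*} [Semiring R] (p : R[X]) :
    (X * derivative p).natDegree ≤ p.natDegree := by
  by_cases hp : derivative p = 0
  · simp [hp]
  · have hlt := natDegree_derivative_lt fun h => hp (derivative_of_natDegree_zero h)
    have hmul := natDegree_mul_le (p := (X : R[X])) (q := derivative p)
    have hX := natDegree_X_le (R := R)
    omega

noncomputable def jacobiOperator {R : Type*} [CommRing R] (α β : R) (p : R[X]) : R[X] :=
  X * (1 - X) * derivative (derivative p) + (C (β + 1) - C (α + β + 2) * X) * derivative p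

theorem natDegree_jacobiOperator_le {R : Type*} [CommRing R] (α β : R) (p : R[X]) :
    (jacobiOperator α β p).natDegree ≤ p.natDegree := by
  set E : R[X] → R[X] := fun q => X * derivative q
  have hE : ∀ q, (E q).natDegree ≤ q.natDegree := natDegree_X_mul_derivative_le
  have hD : (derivative p).natDegree ≤ p.natDegree :=
    (natDegree_derivative_le p).trans (Nat.sub_le _ _)
  have heuler : jacobiOperator α β p
      = E (derivative p) - E (E p) + E p + C (β + 1) * derivative p - C (α + β + 2) * E p := by
    simp only [E, jacobiOperator, derivative_mul, derivative_X]
    ring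
  rw [heuler]
  have := hE (derivative p); have := hE (E p); have := hE p
  have := natDegree_C_mul_le (β + 1) (derivative p)
  have := natDegree_C_mul_le (α + β + 2) (E p)
  have := natDegree_sub_le (E (derivative p)) (E (E p))
  have := natDegree_add_le (E (derivative p) - E (E p)) (E p)
  have := natDegree_add_le (E (derivative p) - E (E p) + E p) (C (β + 1) * derivative p)
  have := natDegree_sub_le (E (derivative p) - E (E p) + E p + C (β + 1) * derivative p)
    (C (α + β + 2) * E p)
  omega

namespace bernsteinPolynomial

variable {R : Type*} [CommRing R]

theorem succ_mul_one_sub_X_mul (n j : ℕ) :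
    ((j + 1 : ℕ) : R[X]) * (1 - X) * bernsteinPolynomial R n (j + 1)
      = ((n - j : ℕ) : R[X]) * X * bernsteinPolynomial R n j := by
  rcases lt_or_ge j n with hjn | hnj
  · obtain ⟨m, rfl⟩ := Nat.exists_eq_add_of_lt hjn
    have hchoose : (((j + m + 1).choose (j + 1) * (j + 1) : ℕ) : R[X])
        = (((j + m + 1).choose j * (m + 1) : ℕ) : R[X]) := by
      rw [Nat.choose_succ_right_eq, show j + m + 1 - j = m + 1 by omega]
    simp only [bernsteinPolynomial, show j + m + 1 - j = m + 1 by omega,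
      show j + m + 1 - (j + 1) = m by omega]
    push_cast at hchoose ⊢
    linear_combination (X ^ (j + 1) * (1 - X) ^ (m + 1)) * hchoose
  · simp [bernsteinPolynomial, Nat.choose_eq_zero_of_lt (Nat.lt_succ_of_le hnj),
      Nat.sub_eq_zero_of_le hnj]

theorem X_mul_one_sub_X_mul_derivative {n j : ℕ} (hj : j ≤ n) :
    X * (1 - X) * derivative (bernsteinPolynomial R n j)
      = ((j : R[X]) - (n : R[X]) * X) * bernsteinPolynomial R n j := by
  obtain ⟨m, rfl⟩ := Nat.exists_eq_add_of_le hj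
  simp only [bernsteinPolynomial, Nat.add_sub_cancel_left, derivative_mul, derivative_pow,
    derivative_natCast, derivative_X, derivative_sub, derivative_one]
  rcases j with _ | j <;> rcases m with _ | m <;> simp <;> ring

end bernsteinPolynomial

theorem jacobiOperator_bernsteinPolynomial {R : Type*} [CommRing R] [IsDomain R] (α β : R)
    {n j : ℕ} (hj : j ≤ n) :
    jacobiOperator α β (bernsteinPolynomial R n j)
      = (if j = 0 then 0 else ((n + 1 - j) * (j + β) : R)) • bernsteinPolynomial R n (j - 1)
        + (j * (j - α - n - 1) + (j - n) * (j + β + 1) : R) • bernsteinPolynomial R n j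
        + ((j + 1) * (α + n - j) : R) • bernsteinPolynomial R n (j + 1) := by
  have hderiv := bernsteinPolynomial.X_mul_one_sub_X_mul_derivative (R := R) hj
  have hderiv₂ := congrArg derivative hderiv
  have hprev : X * ((if j = 0 then 0 else ((n + 1 - j) * (j + β) : R))
        • bernsteinPolynomial R n (j - 1))
      = C ((j : R) * (j + β)) * (1 - X) * bernsteinPolynomial R n j := by
    rcases j with _ | k
    · simp
    · have h := bernsteinPolynomial.succ_mul_one_sub_X_mul (R := R) n k
      rw [Nat.cast_sub (by omega : k ≤ n)] at h
      simp only [Nat.add_sub_cancel, if_neg (Nat.succ_ne_zero k), smul_eq_C_mul]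
      push_cast at h ⊢
      simp only [map_mul, map_add, map_sub, map_natCast, map_one]
      linear_combination (-(k + 1 + C β)) * h
  have hnext := bernsteinPolynomial.succ_mul_one_sub_X_mul (R := R) n j
  rw [Nat.cast_sub hj] at hnext
  have hX : (X * (1 - X) : R[X]) ≠ 0 := mul_ne_zero X_ne_zero (by
    rw [← neg_ne_zero, neg_sub]; exact X_sub_C_ne_zero 1)
  apply mul_left_cancel₀ hX
  simp only [jacobiOperator, derivative_mul, derivative_X, derivative_one, derivative_natCast,
    smul_eq_C_mul, map_mul, map_add, map_sub, map_natCast, map_one, map_ofNat] at hderiv₂ hprev ⊢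
  push_cast at hnext
  linear_combination X * (1 - X) * hderiv₂ + ((j : R[X]) + C β - (n + C α + C β) * X) * hderiv
    - (1 - X) * hprev - (C α + n - j) * X * hnext

theorem intervalIntegrable_weight_mul_s14 {α β : ℝ} (hα : -1 < α) (hβ : -1 < β) {f : ℝ → ℝ}
    (hf : ContinuousOn f (Icc 0 1)) :
    IntervalIntegrable (fun x => (1 - x) ^ α * x ^ β * f x) volume 0 1 := by
  have hleft : IntervalIntegrable (fun x => (1 - x) ^ α * x ^ β * f x) volume 0 (1 / 2) := by
    have hcont : ContinuousOn (fun x : ℝ => (1 - x) ^ α * f x) (uIcc 0 (1 / 2)) := by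
      rw [uIcc_of_le (by norm_num)]
      refine ContinuousOn.mul (fun x hx => ?_) (hf.mono (Icc_subset_Icc_right (by norm_num)))
      exact ContinuousAt.continuousWithinAt <| ContinuousAt.rpow_const (f := fun x : ℝ => 1 - x)
        (by fun_prop) (Or.inl (by linarith [hx.2]))
    convert (intervalIntegral.intervalIntegrable_rpow' hβ).mul_continuousOn hcont using 1
    ext x; ring
  have hright : IntervalIntegrable (fun x => (1 - x) ^ α * x ^ β * f x) volume (1 / 2) 1 := by
    have hcont : ContinuousOn (fun x : ℝ => x ^ β * f x) (uIcc (1 / 2) 1) := by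
      rw [uIcc_of_le (by norm_num)]
      refine ContinuousOn.mul (fun x hx => ?_) (hf.mono (Icc_subset_Icc_left (by norm_num)))
      exact (Real.continuousAt_rpow_const x β (Or.inl (by linarith [hx.1]))).continuousWithinAt
    have hsing : IntervalIntegrable (fun x : ℝ => (1 - x) ^ α) volume (1 / 2) 1 := by
      convert ((intervalIntegral.intervalIntegrable_rpow' hα (a := 0) (b := 1 / 2)).comp_sub_left
        1).symm using 1 <;> norm_num
    convert hsing.mul_continuousOn hcont using 1
    ext x; ring
  exact hleft.trans hright

theorem intervalIntegrable_weight_mul_eval_mul {α β : ℝ} (hα : -1 < α) (hβ : -1 < β)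
    (p q : ℝ[X]) :
    IntervalIntegrable (fun x => (1 - x) ^ α * x ^ β * (p.eval x * q.eval x)) volume 0 1 :=
  intervalIntegrable_weight_mul_s14 hα hβ (p.continuous.mul q.continuous).continuousOn

noncomputable def jacobiForm {α β : ℝ} (hα : -1 < α) (hβ : -1 < β) :
    ℝ[X] →ₗ[ℝ] ℝ[X] →ₗ[ℝ] ℝ :=
  LinearMap.mk₂ ℝ (fun p q => ∫ x in (0 : ℝ)..1, (1 - x) ^ α * x ^ β * (p.eval x * q.eval x))
    (fun p₁ p₂ q => by
      simp only [eval_add, add_mul, mul_add]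
      exact intervalIntegral.integral_add (intervalIntegrable_weight_mul_eval_mul hα hβ _ _)
        (intervalIntegrable_weight_mul_eval_mul hα hβ _ _))
    (fun c p q => by
      simp only [eval_smul, smul_eq_mul, ← intervalIntegral.integral_const_mul]
      congr with x; ring)
    (fun p q₁ q₂ => by
      simp only [eval_add, mul_add]
      exact intervalIntegral.integral_add (intervalIntegrable_weight_mul_eval_mul hα hβ _ _)
        (intervalIntegrable_weight_mul_eval_mul hα hβ _ _))
    (fun c p q => by
      simp only [eval_smul, smul_eq_mul, ← intervalIntegral.integral_const_mul]
      congr with x; ring)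

theorem jacobiForm_apply {α β : ℝ} (hα : -1 < α) (hβ : -1 < β) (p q : ℝ[X]) :
    jacobiForm hα hβ p q = ∫ x in (0 : ℝ)..1, (1 - x) ^ α * x ^ β * (p.eval x * q.eval x) :=
  rfl

theorem hasDerivAt_rpow_mul_one_sub_rpow (a b : ℝ) {x : ℝ} (hx : x ∈ Ioo (0 : ℝ) 1) :
    HasDerivAt (fun y => y ^ (a + 1) * (1 - y) ^ (b + 1))
      ((1 - x) ^ b * x ^ a * ((a + 1) - (a + b + 2) * x)) x := by
  have hx₀ : x ≠ 0 := hx.1.ne'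
  have hx₁ : 1 - x ≠ 0 := (sub_pos.2 hx.2).ne'
  refine ((Real.hasDerivAt_rpow_const (p := a + 1) (Or.inl hx₀)).mul
    ((Real.hasDerivAt_rpow_const (p := b + 1) (Or.inl hx₁)).comp x
      ((hasDerivAt_id x).const_sub 1))).congr_deriv ?_
  simp only [add_sub_cancel_right, Function.comp_apply, Real.rpow_add_one hx₀,
    Real.rpow_add_one hx₁]
  ring

theorem jacobiForm_jacobiOperator_left {α β : ℝ} (hα : -1 < α) (hβ : -1 < β) (u v : ℝ[X]) :
    jacobiForm hα hβ (jacobiOperator α β u) v = jacobiForm hα hβ u (jacobiOperator α β v) := by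
  set F : ℝ → ℝ := fun x => x ^ (β + 1) * (1 - x) ^ (α + 1) *
    (u.eval x * (derivative v).eval x - v.eval x * (derivative u).eval x)
  have hF : ∀ x ∈ Ioo (0 : ℝ) 1, HasDerivAt F ((1 - x) ^ α * x ^ β *
      (u.eval x * (jacobiOperator α β v).eval x - (jacobiOperator α β u).eval x * v.eval x)) x := by
    intro x hx
    refine ((hasDerivAt_rpow_mul_one_sub_rpow β α hx).mul
      (((u.hasDerivAt x).mul ((derivative v).hasDerivAt x)).sub
        ((v.hasDerivAt x).mul ((derivative u).hasDerivAt x)))).congr_deriv ?_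
    simp only [Real.rpow_add_one hx.1.ne', Real.rpow_add_one (sub_pos.2 hx.2).ne', Pi.mul_apply,
      Pi.sub_apply, jacobiOperator, eval_add, eval_mul, eval_sub, eval_X, eval_one, eval_C]
    ring
  have hcont : ContinuousOn F (Icc 0 1) := by fun_prop (disch := linarith)
  have hint := intervalIntegrable_weight_mul_eval_mul hα hβ
  have hFTC := intervalIntegral.integral_eq_sub_of_hasDerivAt_of_le zero_le_one hcont hF <| by
    simpa only [mul_sub] using (hint u (jacobiOperator α β v)).sub (hint (jacobiOperator α β u) v)
  simp only [F, Real.zero_rpow (by linarith : β + 1 ≠ 0), Real.zero_rpow (by linarith : α + 1 ≠ 0),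
    sub_self, zero_mul, mul_zero, sub_zero, mul_sub] at hFTC
  rw [intervalIntegral.integral_sub (hint _ _) (hint _ _), sub_eq_zero] at hFTC
  rw [jacobiForm_apply, jacobiForm_apply, ← hFTC]

namespace IsDualBernstein

variable {n : ℕ} {α β : ℝ} {D : ℕ → ℝ[X]}

theorem jacobiForm_bernsteinPolynomial (hD : IsDualBernstein n α β D) (hα : -1 < α)
    (hβ : -1 < β) {j : ℕ} (hj : j ≤ n) (k : ℕ) :
    jacobiForm hα hβ (bernsteinPolynomial ℝ n k) (D j) = if k = j then 1 else 0 := by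
  rcases le_or_gt k n with hk | hk
  · rw [← hD.2 k hk j hj, jacobiForm_apply]
    congr with x
    simp [bernsteinPolynomial, bern, mul_assoc]
  · rw [bernsteinPolynomial.eq_zero_of_lt ℝ hk, map_zero, LinearMap.zero_apply, if_neg (by omega)]

theorem eq_of_jacobiForm_eq (hD : IsDualBernstein n α β D) (hα : -1 < α) (hβ : -1 < β)
    {p q : ℝ[X]} (hp : p.natDegree ≤ n) (hq : q.natDegree ≤ n)
    (h : ∀ k ≤ n, jacobiForm hα hβ (bernsteinPolynomial ℝ n k) p
      = jacobiForm hα hβ (bernsteinPolynomial ℝ n k) q) : p = q := by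
  have hmem : ∀ {r : ℝ[X]}, r.natDegree ≤ n → r ∈ degreeLT ℝ (n + 1) := fun hr => by
    rw [degreeLT_succ_eq_degreeLE]; exact mem_degreeLE.2 (natDegree_le_iff_degree_le.1 hr)
  refine eq_of_biorthogonal (ι := Fin (n + 1)) (d := fun j => D j)
    (φ := fun k => jacobiForm hα hβ (bernsteinPolynomial ℝ n k))
    (by rw [finrank_eq_card_basis (degreeLT.basis ℝ (n + 1))])
    (fun j => hmem (hD.1 j j.is_le)) (fun k j => ?_) (hmem hp) (hmem hq) (fun k => h k k.is_le)
  simp [hD.jacobiForm_bernsteinPolynomial hα hβ j.is_le, Fin.val_eq_val]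

theorem jacobiOperator_eq (hD : IsDualBernstein n α β D) (hα : -1 < α) (hβ : -1 < β)
    {i : ℕ} (hi : i ≤ n) :
    jacobiOperator α β (D i) = (((n : ℝ) - i) * (i + β + 1)) • D (i + 1)
      + ((i : ℝ) * (i - α - n - 1) + (i - n) * (i + β + 1)) • D i
      + ((i : ℝ) * (α + n + 1 - i)) • D (i - 1) := by
  -- for `i = n` the coefficient of `D (n + 1)`, which is not a dual polynomial, vanishes
  have hnext : ((((n : ℝ) - i) * (i + β + 1)) • D (i + 1)).natDegree ≤ n ∧
      ∀ k, jacobiForm hα hβ (bernsteinPolynomial ℝ n k) ((((n : ℝ) - i) * (i + β + 1)) • D (i + 1))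
        = if k = i + 1 then ((n : ℝ) - i) * (i + β + 1) else 0 := by
    rcases hi.lt_or_eq with hlt | rfl
    · exact ⟨(natDegree_smul_le _ _).trans (hD.1 _ hlt),
        fun k => by simp [hD.jacobiForm_bernsteinPolynomial hα hβ hlt]⟩
    · simp
  have hdeg : ∀ {c : ℝ} {j : ℕ}, j ≤ n → (c • D j).natDegree ≤ n := fun hj =>
    (natDegree_smul_le _ _).trans (hD.1 _ hj)
  refine hD.eq_of_jacobiForm_eq hα hβ ((natDegree_jacobiOperator_le _ _ _).trans (hD.1 i hi))
    (natDegree_add_le_of_degree_le (natDegree_add_le_of_degree_le hnext.1 (hdeg hi))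
      (hdeg (by omega))) fun k hk => ?_
  rw [← jacobiForm_jacobiOperator_left, jacobiOperator_bernsteinPolynomial α β hk, map_add,
    map_add, map_add, map_add, hnext.2]
  simp only [map_smul, LinearMap.add_apply, LinearMap.smul_apply, smul_eq_mul,
    hD.jacobiForm_bernsteinPolynomial hα hβ hi,
    hD.jacobiForm_bernsteinPolynomial hα hβ (by omega : i - 1 ≤ n)]
  obtain rfl | rfl | rfl | hfar :
      k = i + 1 ∨ k = i ∨ k + 1 = i ∨ (k ≠ i + 1 ∧ k ≠ i ∧ k + 1 ≠ i) := by omega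
  all_goals split_ifs <;> first | contradiction | omega | (subst_vars; push_cast; ring)

end IsDualBernstein

/-- Differential-recurrence relation (Theorem 3.4 of the paper). -/
theorem dualBernstein_diffRec_III (n : ℕ) (α β : ℝ) (hα : α > -1) (hβ : β > -1)
    (D : ℕ → Polynomial ℝ) (hD : IsDualBernstein n α β D)
    (i : ℕ) (hi : i ≤ n) (x : ℝ) :
    x*(x-1) * (Polynomial.derivative (Polynomial.derivative (D i))).eval x
      + (1/2)*(α-β+(α+β+2)*(2*x-1)) * (Polynomial.derivative (D i)).eval x
      = ((i:ℝ)-n)*((i:ℝ)+β+1) * (D (i+1)).eval x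
        + (i:ℝ)*((i:ℝ)-α-n-1) * (D (i-1)).eval x
        - ((i:ℝ)*((i:ℝ)-α-n-1) + ((i:ℝ)-n)*((i:ℝ)+β+1)) * (D i).eval x := by
  have h := congrArg (eval x) (hD.jacobiOperator_eq hα hβ hi)
  simp only [jacobiOperator, eval_add, eval_mul, eval_sub, eval_X, eval_one, eval_C, eval_smul,
    smul_eq_mul] at h
  linear_combination -h
end
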